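/- arXiv:1112.6220 — 3 statements merged into one kernel-verified Lean document; each statement's English description precedes it below -/
import Mathlib

section
/- Let p ∈ (0,1] satisfy p ≤ (1−p)² and 1 − (2+p)(1−p)² ≥ 0. Define A^n p = 1 − (1−p)^{n+1} for n ≥ 0 (so Ap = 1 − (1−p)²), and set J = Ap, v* = 2 − Ap, v⁰ = 1 − Ap, vⁿ = Aⁿp for n ≥ 1, and v^∞ = 1. Then these values solve the average-reward dynamic programming fixed-point equations of the symmetric two-user multiaccess broadcast system: v* + J = max{1 + v^∞, v*}; v⁰ + J = max{p + v¹, 2p(1−p) + p²v* + (1−p²)v⁰}; for every n ≥ 1, vⁿ + J = max{p + v^{n+1}, Aⁿp + v¹, p + Aⁿp − 2p·Aⁿp + p·Aⁿp·v* + (1 − p·Aⁿp)·v⁰}; and v^∞ + J = max{p + v^∞, 1 + v¹, 1 − p + p·v* + (1−p)·v⁰}. -/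
/-!
In every equation the maximum is attained by one explicit action, and the other actions are
dominated. Writing `q = 1 - p`, we have `Aⁿp = 1 - q ^ (n + 1)`, `J = A¹p = p (1 + q)`,
`v* = 1 + q²` and `v⁰ = q²`, and transmitting on both queues from the belief state `(p, x)`
is worth `p + x (1 - p) + q²`. Hence at `(p, p)` the joint transmission is worth
`(p + q)² = 1 = v⁰ + J`, and `p ≤ q²` is exactly what makes it beat serving one queue; at
`(p, Aⁿp)` and `(p, 1)` serving the second queue wins, against the joint transmission
because `(2 + p) q² ≤ 1`, and against serving the first queue because `q ^ (n + 1) ≤ q` and `q² ≤ q`.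
-/

namespace MultiaccessBroadcast

/-- `A p n` is `Aⁿp`, the `n`-fold iterate at `p` of the belief update `x ↦ 1 - (1 - p)(1 - x)`. -/
def A (p : ℝ) (n : ℕ) : ℝ := 1 - (1 - p) ^ (n + 1)

variable {p : ℝ}

lemma A_one (p : ℝ) : A p 1 = 1 - (1 - p) ^ 2 := by
  norm_num [A]

lemma A_succ_sub_A (p : ℝ) (n : ℕ) : A p (n + 1) - A p n = p * (1 - p) ^ (n + 1) := by
  simp only [A, pow_succ]
  ring

lemma jointTransmission_value (p x : ℝ) :
    p + x - 2 * p * x + p * x * (2 - A p 1) + (1 - p * x) * (1 - A p 1) =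
      p + x * (1 - p) + (1 - p) ^ 2 := by
  rw [A_one]
  ring

lemma bellman_full (h0 : 0 ≤ p) (h2 : p ≤ 2) :
    (2 - A p 1) + A p 1 = max (1 + 1) (2 - A p 1) := by
  have hA : 0 ≤ A p 1 := by rw [A_one]; nlinarith
  rw [max_eq_left (by linarith)]
  ring

lemma bellman_fresh (hcase1 : p ≤ (1 - p) ^ 2) :
    (1 - A p 1) + A p 1 =
      max (p + A p 1) (2 * p * (1 - p) + p ^ 2 * (2 - A p 1) + (1 - p ^ 2) * (1 - A p 1)) := by
  have hjoint : 2 * p * (1 - p) + p ^ 2 * (2 - A p 1) + (1 - p ^ 2) * (1 - A p 1) = 1 := by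
    rw [A_one]; ring
  rw [hjoint, max_eq_right (by rw [A_one]; linarith)]
  ring

lemma bellman_age (h0 : 0 ≤ p) (h1 : p ≤ 1) (hcase2 : 0 ≤ 1 - (2 + p) * (1 - p) ^ 2)
    {n : ℕ} (hn : 1 ≤ n) :
    A p n + A p 1 = max (p + A p (n + 1)) (max (A p n + A p 1)
      (p + A p n - 2 * p * A p n + p * A p n * (2 - A p 1) + (1 - p * A p n) * (1 - A p 1))) := by
  have hq0 : 0 ≤ 1 - p := by linarith
  have hq1 : 1 - p ≤ 1 := by linarith
  have hstep : A p (n + 1) - A p n ≤ A p 1 - p := by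
    rw [A_succ_sub_A, A_one]
    nlinarith [mul_le_mul_of_nonneg_left (pow_le_of_le_one hq0 hq1 n.add_one_ne_zero) h0]
  have hjoint : p + A p n * (1 - p) + (1 - p) ^ 2 ≤ A p n + A p 1 := by
    have hqn : (1 - p) ^ (n + 1) ≤ (1 - p) ^ 2 := pow_le_pow_of_le_one hq0 hq1 (by omega)
    rw [A_one, A]
    nlinarith
  rw [jointTransmission_value, max_eq_left hjoint, max_eq_right (by linarith)]

lemma bellman_oneFull (h0 : 0 ≤ p) (h1 : p ≤ 1) (hcase2 : 0 ≤ 1 - (2 + p) * (1 - p) ^ 2) :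
    1 + A p 1 = max (p + 1) (max (1 + A p 1) (1 - p + p * (2 - A p 1) + (1 - p) * (1 - A p 1))) := by
  have hjoint : 1 - p + p * (2 - A p 1) + (1 - p) * (1 - A p 1) ≤ 1 + A p 1 := by
    rw [A_one]
    nlinarith [mul_nonneg h0 (sq_nonneg (1 - p))]
  have hserve : p + 1 ≤ 1 + A p 1 := by
    rw [A_one]
    nlinarith
  rw [max_eq_left hjoint, max_eq_right hserve]

end MultiaccessBroadcast

open MultiaccessBroadcast in
/-- Lemma 9, case 2: for the symmetric two-user multiaccess broadcast
system with arrival rate `p` satisfying `p ≤ (1-p)²` and `1 - (2+p)(1-p)² ≥ 0` (i.e.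
`α₁ ≤ p ≤ τ`), the values `J = Ap`, `v* = 2 - Ap`, `v⁰ = 1 - Ap`, `vⁿ = Aⁿp` (n ≥ 1),
`v^∞ = 1`, where `Aⁿp = 1 - (1-p)^{n+1}`, solve the average-reward dynamic-programming
fixed-point equations. -/
theorem MAB_DP_solution_case2 (p : ℝ) (hp0 : 0 < p) (hp1 : p ≤ 1)
    (hcase1 : p ≤ (1 - p) ^ 2) (hcase2 : 0 ≤ 1 - (2 + p) * (1 - p) ^ 2) :
    let A : ℕ → ℝ := fun n => 1 - (1 - p) ^ (n + 1)
    let J : ℝ := A 1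
    let vs : ℝ := 2 - A 1
    let v0 : ℝ := 1 - A 1
    let v : ℕ → ℝ := fun n => A n
    let vinf : ℝ := 1
    (vs + J = max (1 + vinf) vs) ∧
    (v0 + J = max (p + v 1) (2 * p * (1 - p) + p ^ 2 * vs + (1 - p ^ 2) * v0)) ∧
    (∀ n : ℕ, 1 ≤ n →
      v n + J = max (p + v (n + 1)) (max (A n + v 1)
        (p + A n - 2 * p * A n + p * A n * vs + (1 - p * A n) * v0))) ∧
    (vinf + J = max (p + vinf) (max (1 + v 1) (1 - p + p * vs + (1 - p) * v0))) :=
  ⟨bellman_full hp0.le (by linarith), bellman_fresh hcase1,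
    fun _ hn => bellman_age hp0.le hp1 hcase2 hn, bellman_oneFull hp0.le hp1 hcase2⟩
end

section
/- For n ≥ 0 define the polynomial φ_n(x) = 1 + (1−x)² − (3+x)(1−x)^{n+1}. Then: (i) φ_n(0) = −1 and φ_n(1) = 1, so φ_n has a root in (0,1); (ii) for all x, φ_{n+1}(x) = (1−x)·φ_n(x) + x·(1 + (1−x)²); and (iii) if α ∈ [0,1] satisfies φ_n(α) = 0, then α > 0, φ_{n+1}(α) > 0, and there exists β ∈ (0, α) with φ_{n+1}(β) = 0; in particular, the least roots of the φ_n in [0,1] form a strictly decreasing sequence. -/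
/-!
The recursion `φ_{n+1}(x) = (1 - x) φ_n(x) + x (1 + (1 - x)²)` shows that at a root `α > 0` of
`φ_n` the next polynomial is positive, while `φ_{n+1}(0) = -1`; the intermediate value theorem
then gives a root of `φ_{n+1}` strictly left of `α`. Applied to the least root of `φ_n` (which
exists because the zero set in `[0, 1]` is compact), this makes the least roots decrease.
-/

open Set

noncomputable def phi (n : ℕ) (x : ℝ) : ℝ := 1 + (1 - x) ^ 2 - (3 + x) * (1 - x) ^ (n + 1)

@[fun_prop]
lemma continuous_phi (n : ℕ) : Continuous (phi n) := by
  unfold phi; fun_prop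

@[simp]
lemma phi_apply_zero (n : ℕ) : phi n 0 = -1 := by
  norm_num [phi]

@[simp]
lemma phi_apply_one (n : ℕ) : phi n 1 = 1 := by
  simp [phi]

lemma phi_succ (n : ℕ) (x : ℝ) :
    phi (n + 1) x = (1 - x) * phi n x + x * (1 + (1 - x) ^ 2) := by
  simp only [phi, pow_succ]; ring

lemma exists_phi_eq_zero_of_pos {n : ℕ} {b : ℝ} (hb : 0 < b) (hφb : 0 < phi n b) :
    ∃ β ∈ Ioo 0 b, phi n β = 0 :=
  intermediate_value_Ioo hb.le (continuous_phi n).continuousOn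
    ⟨by simp, hφb⟩

lemma pos_of_phi_eq_zero {n : ℕ} {α : ℝ} (hα : 0 ≤ α) (hroot : phi n α = 0) : 0 < α :=
  hα.lt_of_ne <| by rintro rfl; simp at hroot

lemma phi_succ_pos_of_phi_eq_zero {n : ℕ} {α : ℝ} (hα : 0 < α) (hroot : phi n α = 0) :
    0 < phi (n + 1) α := by
  rw [phi_succ, hroot, mul_zero, zero_add]
  positivity

lemma csInf_zeros_mem {f : ℝ → ℝ} (hf : Continuous f) {a b : ℝ}
    (hne : {x | x ∈ Icc a b ∧ f x = 0}.Nonempty) :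
    sInf {x | x ∈ Icc a b ∧ f x = 0} ∈ {x | x ∈ Icc a b ∧ f x = 0} :=
  (isClosed_Icc.inter (isClosed_eq hf continuous_const)).csInf_mem hne ⟨a, fun _ hx => hx.1.1⟩

/-- properties of the polynomials `φ_n(x) = 1 + (1-x)² - (3+x)(1-x)^{n+1}`:
(i) `φ_n(0) = -1`, `φ_n(1) = 1`, and `φ_n` has a root in `(0,1)`;
(ii) `φ_{n+1}(x) = (1-x)·φ_n(x) + x·(1 + (1-x)²)`;
(iii) if `α ∈ [0,1]` satisfies `φ_n(α) = 0`, then `0 < α`, `φ_{n+1}(α) > 0`, and there is a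
`β ∈ (0, α)` with `φ_{n+1}(β) = 0`; in particular (iv) the least roots of the `φ_n` in `[0,1]`
form a strictly decreasing sequence. -/
theorem phi_polynomial_properties :
    let φ : ℕ → ℝ → ℝ := fun n x => 1 + (1 - x) ^ 2 - (3 + x) * (1 - x) ^ (n + 1)
    (∀ n : ℕ, φ n 0 = -1 ∧ φ n 1 = 1 ∧ ∃ α ∈ Set.Ioo (0 : ℝ) 1, φ n α = 0) ∧
    (∀ (n : ℕ) (x : ℝ), φ (n + 1) x = (1 - x) * φ n x + x * (1 + (1 - x) ^ 2)) ∧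
    (∀ (n : ℕ) (α : ℝ), α ∈ Set.Icc (0 : ℝ) 1 → φ n α = 0 →
      0 < α ∧ 0 < φ (n + 1) α ∧ ∃ β ∈ Set.Ioo (0 : ℝ) α, φ (n + 1) β = 0) ∧
    (∀ n : ℕ,
      sInf {x | x ∈ Set.Icc (0 : ℝ) 1 ∧ φ (n + 1) x = 0} <
        sInf {x | x ∈ Set.Icc (0 : ℝ) 1 ∧ φ n x = 0}) := by
  intro φ
  have root_step (n : ℕ) (α : ℝ) (hα : α ∈ Icc (0 : ℝ) 1) (hroot : phi n α = 0) :
      0 < α ∧ 0 < phi (n + 1) α ∧ ∃ β ∈ Ioo 0 α, phi (n + 1) β = 0 := by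
    have hα_pos := pos_of_phi_eq_zero hα.1 hroot
    have hφ_pos := phi_succ_pos_of_phi_eq_zero hα_pos hroot
    exact ⟨hα_pos, hφ_pos, exists_phi_eq_zero_of_pos hα_pos hφ_pos⟩
  have exists_root (n : ℕ) : ∃ α ∈ Ioo (0 : ℝ) 1, phi n α = 0 :=
    exists_phi_eq_zero_of_pos one_pos (by simp)
  refine ⟨fun n => ⟨phi_apply_zero n, phi_apply_one n, exists_root n⟩, phi_succ, root_step,
    fun n => ?_⟩
  obtain ⟨α, hα, hα_root⟩ := exists_root n
  obtain ⟨hmem, hroot⟩ := csInf_zeros_mem (continuous_phi n) ⟨α, Ioo_subset_Icc_self hα, hα_root⟩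
  obtain ⟨-, -, β, hβ, hβ_root⟩ := root_step n _ hmem hroot
  calc sInf {x | x ∈ Icc (0 : ℝ) 1 ∧ phi (n + 1) x = 0}
      ≤ β := csInf_le ⟨0, fun _ hx => hx.1.1⟩ ⟨⟨hβ.1.le, hβ.2.le.trans hmem.2⟩, hβ_root⟩
    _ < _ := hβ.2
end

section
/- Fix p¹, p² ∈ (0,1) and define A_i q = 1 − (1−p^i)(1−q) for q ∈ [0,1], i = 1,2. Define the belief-update map F on [0,1]² by: F((q¹,q²), u, (0,0)) = (A₁q¹, A₂q²); F((q¹,q²), u, (1,0)) = (p¹, A₂q²); F((q¹,q²), u, (0,1)) = (A₁q¹, p²); F((q¹,q²), (1,1), (1,1)) = (1,1); and F((q¹,q²), u, (1,1)) = (p¹, p²) for u ≠ (1,1), where u ∈ {0,1}² and s ∈ {0,1}². Then the countable set R = {(1,1), (1,p²), (p¹,1), (p¹,p²)} ∪ {(p¹, A₂ⁿp²) : n ∈ ℕ} ∪ {(A₁ⁿp¹, p²) : n ∈ ℕ} contains (p¹, p²) and is closed under q ↦ F(q, u, s) for every u ∈ {0,1}² and every s ∈ {(1,0), (0,1), (1,1)};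 consequently every belief state reachable from (p¹, p²) under such actions lies in R, so the reachable set is countable. -/
/-!
Each coordinate of a belief in `R` lies in the orbit `{1} ∪ {A_iⁿ pⁱ}`, which `A_i` maps into
itself because `A_i 1 = 1`; so `R` is countable. Every action other than `(0,0)` either sends
the belief to `(1,1)` or resets some coordinate to `pⁱ`, and a belief with one coordinate reset
and the other in its orbit lies in `R`. Hence `R` is invariant and contains all reachable beliefs.
-/

theorem Relation.ReflTransGen.mem_of_forall_rel_mem {α : Type*} {r : α → α → Prop} {S : Set α}
    {a b : α} (ha : a ∈ S) (hS : ∀ x ∈ S, ∀ y, r x y → y ∈ S)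
    (h : Relation.ReflTransGen r a b) : b ∈ S := by
  induction h with
  | refl => exact ha
  | tail _ hstep ih => exact hS _ ih _ hstep

namespace MAB

open Set

/-- The map `A_i` of the paper, for `p = pⁱ`. -/
def arrivalUpdate (p q : ℝ) : ℝ := 1 - (1 - p) * (1 - q)

def arrivalOrbit (p : ℝ) : Set ℝ := insert 1 (range fun n : ℕ => 1 - (1 - p) ^ n * (1 - p))

theorem self_mem_arrivalOrbit (p : ℝ) : p ∈ arrivalOrbit p :=
  mem_insert_of_mem _ ⟨0, by ring⟩

theorem arrivalUpdate_mem_arrivalOrbit {p x : ℝ} (hx : x ∈ arrivalOrbit p) :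
    arrivalUpdate p x ∈ arrivalOrbit p := by
  rcases hx with rfl | ⟨n, rfl⟩
  · left
    simp [arrivalUpdate]
  · exact mem_insert_of_mem _ ⟨n + 1, by simp only [arrivalUpdate]; ring⟩

theorem arrivalOrbit_countable (p : ℝ) : (arrivalOrbit p).Countable :=
  (countable_range _).insert 1

/-- The map `F(q, u, s)` of the paper. -/
def beliefUpdate (p1 p2 : ℝ) (q : ℝ × ℝ) (u s : Bool × Bool) : ℝ × ℝ :=
  if s = (false, false) then (arrivalUpdate p1 q.1, arrivalUpdate p2 q.2)
  else if s = (true, false) then (p1, arrivalUpdate p2 q.2)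
  else if s = (false, true) then (arrivalUpdate p1 q.1, p2)
  else if u = (true, true) then (1, 1) else (p1, p2)

def reachableSet (p1 p2 : ℝ) : Set (ℝ × ℝ) :=
  {(1, 1), (1, p2), (p1, 1), (p1, p2)} ∪
    {q | ∃ n : ℕ, 1 ≤ n ∧ q = (p1, 1 - (1 - p2) ^ n * (1 - p2))} ∪
    {q | ∃ n : ℕ, 1 ≤ n ∧ q = (1 - (1 - p1) ^ n * (1 - p1), p2)}

variable {p1 p2 : ℝ}

theorem mk_mem_reachableSet (p1 p2 : ℝ) : (p1, p2) ∈ reachableSet p1 p2 := by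
  simp [reachableSet]

theorem reachableSet_subset_prod (p1 p2 : ℝ) :
    reachableSet p1 p2 ⊆ arrivalOrbit p1 ×ˢ arrivalOrbit p2 := by
  have h1 := self_mem_arrivalOrbit p1
  have h2 := self_mem_arrivalOrbit p2
  have one_mem : ∀ p : ℝ, (1 : ℝ) ∈ arrivalOrbit p := fun _ => mem_insert _ _
  intro q hq
  simp only [reachableSet, mem_union, mem_insert_iff, mem_singleton_iff, mem_ofPred_eq] at hq
  rcases hq with ((rfl | rfl | rfl | rfl) | ⟨n, -, rfl⟩) | ⟨n, -, rfl⟩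
  · exact ⟨one_mem p1, one_mem p2⟩
  · exact ⟨one_mem p1, h2⟩
  · exact ⟨h1, one_mem p2⟩
  · exact ⟨h1, h2⟩
  · exact ⟨h1, mem_insert_of_mem _ ⟨n, rfl⟩⟩
  · exact ⟨mem_insert_of_mem _ ⟨n, rfl⟩, h2⟩

theorem reachableSet_countable (p1 p2 : ℝ) : (reachableSet p1 p2).Countable :=
  ((arrivalOrbit_countable p1).prod (arrivalOrbit_countable p2)).mono
    (reachableSet_subset_prod p1 p2)

theorem mk_mem_reachableSet_of_mem_arrivalOrbit_left {x : ℝ} (hx : x ∈ arrivalOrbit p1) :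
    (x, p2) ∈ reachableSet p1 p2 := by
  rcases hx with rfl | ⟨_ | n, rfl⟩
  · simp [reachableSet]
  · simp [reachableSet]
  · exact mem_union_right _ ⟨n + 1, by omega, by ring_nf⟩

theorem mk_mem_reachableSet_of_mem_arrivalOrbit_right {y : ℝ} (hy : y ∈ arrivalOrbit p2) :
    (p1, y) ∈ reachableSet p1 p2 := by
  rcases hy with rfl | ⟨_ | n, rfl⟩
  · simp [reachableSet]
  · simp [reachableSet]
  · exact mem_union_left _ (mem_union_right _ ⟨n + 1, by omega, by ring_nf⟩)

theorem beliefUpdate_mem_reachableSet {q : ℝ × ℝ} (hq : q ∈ reachableSet p1 p2)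
    (u : Bool × Bool) {s : Bool × Bool} (hs : s ≠ (false, false)) :
    beliefUpdate p1 p2 q u s ∈ reachableSet p1 p2 := by
  obtain ⟨hq1, hq2⟩ := reachableSet_subset_prod p1 p2 hq
  rcases s with ⟨_ | _, _ | _⟩
  · exact absurd rfl hs
  · simpa [beliefUpdate] using
      mk_mem_reachableSet_of_mem_arrivalOrbit_left (p2 := p2) (arrivalUpdate_mem_arrivalOrbit hq1)
  · simpa [beliefUpdate] using
      mk_mem_reachableSet_of_mem_arrivalOrbit_right (p1 := p1) (arrivalUpdate_mem_arrivalOrbit hq2)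
  · by_cases hu : u = (true, true)
    · simp [beliefUpdate, hu, reachableSet]
    · simpa [beliefUpdate, hu] using mk_mem_reachableSet p1 p2

end MAB

open MAB in
theorem MAB_reachable_set_countable_general (p1 p2 : ℝ) :
    let A1 : ℝ → ℝ := fun q => 1 - (1 - p1) * (1 - q)
    let A2 : ℝ → ℝ := fun q => 1 - (1 - p2) * (1 - q)
    let F : ℝ × ℝ → Bool × Bool → Bool × Bool → ℝ × ℝ := fun q u s =>
      if s = (false, false) then (A1 q.1, A2 q.2)
      else if s = (true, false) then (p1, A2 q.2)
      else if s = (false, true) then (A1 q.1, p2)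
      else if u = (true, true) then (1, 1) else (p1, p2)
    let R : Set (ℝ × ℝ) :=
      {(1, 1), (1, p2), (p1, 1), (p1, p2)} ∪
        {q | ∃ n : ℕ, 1 ≤ n ∧ q = (p1, 1 - (1 - p2) ^ n * (1 - p2))} ∪
        {q | ∃ n : ℕ, 1 ≤ n ∧ q = (1 - (1 - p1) ^ n * (1 - p1), p2)}
    ((p1, p2) ∈ R) ∧
    (∀ q ∈ R, ∀ u s : Bool × Bool, s ≠ (false, false) → F q u s ∈ R) ∧
    (∀ q : ℝ × ℝ,
      Relation.ReflTransGen
        (fun a b => ∃ u s : Bool × Bool, s ≠ (false, false) ∧ b = F a u s) (p1, p2) q →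
      q ∈ R) ∧
    R.Countable := by
  intro A1 A2 F R
  have hF : F = beliefUpdate p1 p2 := rfl
  have hR : R = reachableSet p1 p2 := rfl
  rw [hF, hR]
  have closed : ∀ q ∈ reachableSet p1 p2, ∀ u s : Bool × Bool, s ≠ (false, false) →
      beliefUpdate p1 p2 q u s ∈ reachableSet p1 p2 :=
    fun q hq u _ hs => beliefUpdate_mem_reachableSet hq u hs
  refine ⟨mk_mem_reachableSet p1 p2, closed, fun q hq => ?_, reachableSet_countable p1 p2⟩
  refine hq.mem_of_forall_rel_mem (mk_mem_reachableSet p1 p2) ?_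
  rintro x hx _ ⟨u, s, hs, rfl⟩
  exact closed x hx u s hs

/-- for the two-user multiaccess broadcast system with arrival rates
`p¹, p² ∈ (0,1)`, the belief-update map `F` (with transmission prescriptions
`s ∈ {(1,0),(0,1),(1,1)}`, i.e. `s ≠ (0,0)`, and realized transmissions `u`) leaves the
countable set
`R = {(1,1), (1,p²), (p¹,1), (p¹,p²)} ∪ {(p¹, A₂ⁿp²) : n ≥ 1} ∪ {(A₁ⁿp¹, p²) : n ≥ 1}`
invariant, `R` contains `(p¹,p²)`, and consequently every belief state reachable from
`(p¹,p²)` lies in `R`; in particular the reachable set is countable. Here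
`A_i q = 1 - (1-pⁱ)(1-q)` and `A_iⁿ q = 1 - (1-pⁱ)ⁿ(1-q)`; booleans `true`/`false` encode
the transmission decisions `1`/`0`. -/
theorem MAB_reachable_set_countable (p1 p2 : ℝ)
    (hp1 : p1 ∈ Set.Ioo (0 : ℝ) 1) (hp2 : p2 ∈ Set.Ioo (0 : ℝ) 1) :
    let A1 : ℝ → ℝ := fun q => 1 - (1 - p1) * (1 - q)
    let A2 : ℝ → ℝ := fun q => 1 - (1 - p2) * (1 - q)
    let F : ℝ × ℝ → Bool × Bool → Bool × Bool → ℝ × ℝ := fun q u s =>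
      if s = (false, false) then (A1 q.1, A2 q.2)
      else if s = (true, false) then (p1, A2 q.2)
      else if s = (false, true) then (A1 q.1, p2)
      else if u = (true, true) then (1, 1) else (p1, p2)
    let R : Set (ℝ × ℝ) :=
      {(1, 1), (1, p2), (p1, 1), (p1, p2)} ∪
        {q | ∃ n : ℕ, 1 ≤ n ∧ q = (p1, 1 - (1 - p2) ^ n * (1 - p2))} ∪
        {q | ∃ n : ℕ, 1 ≤ n ∧ q = (1 - (1 - p1) ^ n * (1 - p1), p2)}
    ((p1, p2) ∈ R) ∧
    (∀ q ∈ R, ∀ u s : Bool × Bool, s ≠ (false, false) → F q u s ∈ R) ∧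
    (∀ q : ℝ × ℝ,
      Relation.ReflTransGen
        (fun a b => ∃ u s : Bool × Bool, s ≠ (false, false) ∧ b = F a u s) (p1, p2) q →
      q ∈ R) ∧
    R.Countable :=
  MAB_reachable_set_countable_general p1 p2
end
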